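/- arXiv:1805.02519 — 3 statements merged into one kernel-verified Lean document; each statement's English description precedes it below -/
import Mathlib

section
/- If T is a tree of order n with independence number α satisfying 2α > n, then the number of maximum independent sets of T is at most 2^(n−α−1). -/
open SimpleGraph

/-- A set of vertices is independent if its vertices are pairwise non-adjacent. -/
def SimpleGraph.IsIndepSet' {V : Type*} (G : SimpleGraph V) (s : Set V) : Prop :=
  s.Pairwise (fun u v => ¬ G.Adj u v)

/-- The independence number of a graph. -/
noncomputable def indepNum {V : Type*} (G : SimpleGraph V) : ℕ :=
  sSup {k | ∃ s : Finset V, G.IsIndepSet' ↑s ∧ s.card = k}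

/-- The number of maximum independent sets of a graph. -/
noncomputable def numMaxIndep {V : Type*} (G : SimpleGraph V) : ℕ :=
  {s : Finset V | G.IsIndepSet' ↑s ∧ s.card = _root_.indepNum G}.ncard

/-!
In a forest, if `2α > n` then some vertex `u` lies in every maximum independent set. This is
proved for the subgraph induced on any vertex set `W`, by induction on `W`: acyclicity gives a
vertex `v` with at most one neighbour in `W`. If `v` has none, it lies in every maximum independent
set of `W`. If `v` has exactly one neighbour `p`, every maximum independent set of `W` contains
exactly one of `v`, `p`, so deleting both lowers `α` by one and `n` by two; the inequality passes
to `W \ {v, p}`, and the vertex found there also works for `W`.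

In a tree on at least two vertices, `u` has a neighbour `v`, which lies in no maximum independent
set. Fix a maximum independent set `S`. If `I \ S = J \ S` for maximum independent sets `I`, `J`,
then `I ∪ J` is independent, so `I = J`. Hence `I ↦ I \ S` embeds the maximum independent sets
into the subsets of `V \ (S ∪ {v})`, a set of `n - α - 1` vertices.
-/

open Finset

namespace SimpleGraph

variable {V : Type*} {G : SimpleGraph V}

theorem IsIndepSet'.mono {s t : Set V} (ht : G.IsIndepSet' t) (hst : s ⊆ t) : G.IsIndepSet' s :=
  Set.Pairwise.mono hst ht

theorem IsIndepSet'.insert {s : Set V} {v : V} (hs : G.IsIndepSet' s) (hv : v ∉ s)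
    (hadj : ∀ u ∈ s, ¬ G.Adj v u) : G.IsIndepSet' (insert v s) :=
  Set.Pairwise.insert_of_notMem hv hs fun u hu => ⟨hadj u hu, fun h => hadj u hu h.symm⟩

theorem IsIndepSet'.union_of_sdiff_eq [DecidableEq V] {s t r : Finset V}
    (hs : G.IsIndepSet' ↑s) (ht : G.IsIndepSet' ↑t) (hr : G.IsIndepSet' ↑r)
    (hst : s \ r = t \ r) : G.IsIndepSet' ↑(s ∪ t) := by
  have mem_r {a : V} {x y : Finset V} (h : x \ r = y \ r) (hx : a ∈ x) (hy : a ∉ y) : a ∈ r := by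
    by_contra har
    exact hy (mem_sdiff.mp (h ▸ mem_sdiff.mpr ⟨hx, har⟩)).1
  rw [coe_union]
  refine Set.pairwise_union.mpr ⟨hs, ht, fun a ha b hb hab => ?_⟩
  by_cases hat : a ∈ t
  · exact ⟨ht hat hb hab, ht hb hat hab.symm⟩
  by_cases hbs : b ∈ s
  · exact ⟨hs ha hbs hab, hs hbs ha hab.symm⟩
  have har := mem_r hst ha hat
  have hbr := mem_r hst.symm hb hbs
  exact ⟨hr har hbr hab, hr hbr har hab.symm⟩

noncomputable def indepNumOn (G : SimpleGraph V) (W : Finset V) : ℕ :=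
  sSup {k | ∃ s ⊆ W, G.IsIndepSet' ↑s ∧ #s = k}

def IsMaximumIndepSetOn (G : SimpleGraph V) (W s : Finset V) : Prop :=
  s ⊆ W ∧ G.IsIndepSet' ↑s ∧ #s = G.indepNumOn W

section indepNumOn

variable {W s : Finset V}

theorem bddAbove_indepSetCards (W : Finset V) :
    BddAbove {k | ∃ s ⊆ W, G.IsIndepSet' ↑s ∧ #s = k} :=
  ⟨#W, fun _ ⟨_, hs, _, hk⟩ => hk ▸ card_le_card hs⟩

theorem card_le_indepNumOn (hs : s ⊆ W) (hind : G.IsIndepSet' ↑s) : #s ≤ G.indepNumOn W :=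
  le_csSup (bddAbove_indepSetCards W) ⟨s, hs, hind, rfl⟩

theorem exists_isMaximumIndepSetOn (G : SimpleGraph V) (W : Finset V) :
    ∃ s, G.IsMaximumIndepSetOn W s := by
  obtain ⟨s, hs, hind, hcard⟩ := Nat.sSup_mem (s := {k | ∃ s ⊆ W, G.IsIndepSet' ↑s ∧ #s = k})
    ⟨0, ∅, empty_subset W, by simp [IsIndepSet'], card_empty⟩ (bddAbove_indepSetCards W)
  exact ⟨s, hs, hind, hcard⟩

theorem indepNumOn_le_card (G : SimpleGraph V) (W : Finset V) : G.indepNumOn W ≤ #W := by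
  obtain ⟨s, hs, -, hcard⟩ := G.exists_isMaximumIndepSetOn W
  exact hcard ▸ card_le_card hs

theorem IsMaximumIndepSetOn.mem_of_forall_not_adj [DecidableEq V]
    (hs : G.IsMaximumIndepSetOn W s) {v : V} (hv : v ∈ W) (hadj : ∀ u ∈ s, ¬ G.Adj v u) :
    v ∈ s := by
  by_contra hvs
  have hins : G.IsIndepSet' ↑(insert v s) := by
    rw [coe_insert]
    exact hs.2.1.insert (by exact_mod_cast hvs) hadj
  have := card_le_indepNumOn (insert_subset hv hs.1) hins
  rw [card_insert_of_notMem hvs, hs.2.2] at this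
  omega

end indepNumOn

section leaf

variable [DecidableEq V] {W s : Finset V} {v p : V}

theorem IsMaximumIndepSetOn.card_sdiff_pair_add_one (hs : G.IsMaximumIndepSetOn W s)
    (hv : v ∈ W) (hadj : G.Adj v p) (hleaf : ∀ u ∈ W, G.Adj v u → u = p) :
    #(s \ {v, p}) + 1 = #s := by
  have hnot_both : ¬ (v ∈ s ∧ p ∈ s) := fun ⟨hvs, hps⟩ => hs.2.1 hvs hps hadj.ne hadj
  have hone : v ∈ s ∨ p ∈ s := by
    by_contra! h
    exact h.1 (hs.mem_of_forall_not_adj hv fun u hu hvu => h.2 (hleaf u (hs.1 hu) hvu ▸ hu))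
  have hinter : #(s ∩ {v, p}) = 1 := by
    rcases hone with hvs | hps
    · rw [inter_comm, insert_inter_of_mem hvs, singleton_inter_of_notMem (hnot_both ⟨hvs, ·⟩)]
      rfl
    · have hvs : v ∉ s := (hnot_both ⟨·, hps⟩)
      rw [inter_comm, insert_inter_of_notMem hvs, singleton_inter_of_mem hps]
      rfl
  rw [← hinter, card_sdiff_add_card_inter]

theorem indepNumOn_sdiff_pair_add_one (hv : v ∈ W) (hadj : G.Adj v p)
    (hleaf : ∀ u ∈ W, G.Adj v u → u = p) :
    G.indepNumOn (W \ {v, p}) + 1 = G.indepNumOn W := by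
  apply le_antisymm
  · obtain ⟨s, hs, hind, hcard⟩ := G.exists_isMaximumIndepSetOn (W \ {v, p})
    have hvs : v ∉ s := fun h => (mem_sdiff.mp (hs h)).2 (by simp)
    have hins : G.IsIndepSet' ↑(insert v s) := by
      rw [coe_insert]
      refine hind.insert (by exact_mod_cast hvs) fun u hu hvu => ?_
      have hu' := mem_sdiff.mp (hs hu)
      exact hu'.2 (by simp [hleaf u hu'.1 hvu])
    have := card_le_indepNumOn (insert_subset hv ((hs.trans sdiff_subset))) hins
    rwa [card_insert_of_notMem hvs, hcard] at this
  · obtain ⟨s, hs⟩ := G.exists_isMaximumIndepSetOn W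
    have := card_le_indepNumOn (W := W \ {v, p}) (sdiff_subset_sdiff hs.1 subset_rfl)
      (hs.2.1.mono (coe_subset.mpr sdiff_subset))
    have := hs.card_sdiff_pair_add_one hv hadj hleaf
    rw [hs.2.2] at this
    omega

theorem IsMaximumIndepSetOn.sdiff_pair (hs : G.IsMaximumIndepSetOn W s) (hv : v ∈ W)
    (hadj : G.Adj v p) (hleaf : ∀ u ∈ W, G.Adj v u → u = p) :
    G.IsMaximumIndepSetOn (W \ {v, p}) (s \ {v, p}) := by
  refine ⟨sdiff_subset_sdiff hs.1 subset_rfl, hs.2.1.mono (coe_subset.mpr sdiff_subset), ?_⟩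
  have h1 := hs.card_sdiff_pair_add_one hv hadj hleaf
  have h2 := indepNumOn_sdiff_pair_add_one hv hadj hleaf
  rw [hs.2.2] at h1
  omega

end leaf

theorem IsAcyclic.exists_subsingleton_adj_inter (hG : G.IsAcyclic) {W : Finset V}
    (hW : W.Nonempty) : ∃ v ∈ W, ∀ a ∈ W, ∀ b ∈ W, G.Adj v a → G.Adj v b → a = b := by
  by_contra! h
  -- otherwise every path inside `W` extends at its start, so `W` holds arbitrarily long paths
  have long_path (n : ℕ) :
      ∃ (v u : V) (p : G.Walk v u), p.IsPath ∧ (∀ y ∈ p.support, y ∈ W) ∧ p.length = n := by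
    induction n with
    | zero =>
      obtain ⟨w, hw⟩ := hW
      exact ⟨w, w, .nil, .nil, by simpa using hw, rfl⟩
    | succ n ih =>
      obtain ⟨v, u, p, hp, hpW, rfl⟩ := ih
      obtain ⟨a, ha, b, hb, hva, hvb, hab⟩ := h v (hpW v p.start_mem_support)
      obtain ⟨x, hxW, hvx, hx⟩ : ∃ x ∈ W, G.Adj v x ∧ x ≠ p.snd := by
        by_cases ha' : a = p.snd
        · exact ⟨b, hb, hvb, ha' ▸ hab.symm⟩
        · exact ⟨a, ha, hva, ha'⟩
      have hxp : x ∉ p.support := fun hxp => hx (hG.eq_snd_of_adj_start hp hvx hxp)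
      refine ⟨x, u, .cons hvx.symm p, hp.cons hxp, fun y hy => ?_, rfl⟩
      rcases List.mem_cons.mp (Walk.support_cons _ _ ▸ hy) with rfl | hy
      exacts [hxW, hpW y hy]
  classical
  obtain ⟨v, u, p, hp, hpW, hlen⟩ := long_path #W
  have : p.support.toFinset ⊆ W := fun y hy => hpW y (List.mem_toFinset.mp hy)
  have := card_le_card this
  rw [List.toFinset_card_of_nodup hp.support_nodup, Walk.length_support] at this
  omega

theorem IsAcyclic.exists_mem_forall_isMaximumIndepSetOn [DecidableEq V] (hG : G.IsAcyclic)
    (W : Finset V) (hW : #W < 2 * G.indepNumOn W) :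
    ∃ u ∈ W, ∀ s, G.IsMaximumIndepSetOn W s → u ∈ s := by
  induction W using Finset.strongInduction with
  | H W ih =>
  have hne : W.Nonempty := card_pos.mp (by have := G.indepNumOn_le_card W; omega)
  obtain ⟨v, hv, hsub⟩ := hG.exists_subsingleton_adj_inter hne
  by_cases hp : ∃ p ∈ W, G.Adj v p
  · obtain ⟨p, hp, hvp⟩ := hp
    have hleaf : ∀ u ∈ W, G.Adj v u → u = p := fun u hu hvu => hsub u hu p hp hvu hvp
    have hpair : {v, p} ⊆ W := insert_subset hv (singleton_subset_iff.mpr hp)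
    have hcard : #(W \ {v, p}) + 2 = #W := by
      rw [card_sdiff_of_subset hpair, card_pair hvp.ne]
      have := card_le_card hpair
      rw [card_pair hvp.ne] at this
      omega
    have hα := indepNumOn_sdiff_pair_add_one hv hvp hleaf
    obtain ⟨u, hu, hmem⟩ :=
      ih (W \ {v, p}) (sdiff_ssubset hpair (insert_nonempty v {p})) (by omega)
    exact ⟨u, (mem_sdiff.mp hu).1,
      fun s hs => (mem_sdiff.mp (hmem _ (hs.sdiff_pair hv hvp hleaf))).1⟩
  · push Not at hp
    exact ⟨v, hv, fun s hs => hs.mem_of_forall_not_adj hv fun u hu => hp u (hs.1 hu)⟩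

theorem injOn_sdiff_isMaximumIndepSetOn [DecidableEq V] {W r : Finset V}
    (hr : G.IsIndepSet' ↑r) : Set.InjOn (· \ r) {s | G.IsMaximumIndepSetOn W s} := by
  intro s hs t ht hst
  have hle := card_le_indepNumOn (union_subset hs.1 ht.1) (hs.2.1.union_of_sdiff_eq ht.2.1 hr hst)
  have hts : t ⊆ s :=
    union_eq_left.mp (eq_of_subset_of_card_le subset_union_left (hs.2.2 ▸ hle)).symm
  exact (eq_of_subset_of_card_le hts (by rw [hs.2.2, ht.2.2])).symm

theorem indepNum_eq_indepNumOn_univ [Fintype V] (G : SimpleGraph V) :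
    _root_.indepNum G = G.indepNumOn univ := by
  simp [_root_.indepNum, indepNumOn]

theorem numMaxIndep_eq_ncard [Fintype V] (G : SimpleGraph V) :
    numMaxIndep G = {s | G.IsMaximumIndepSetOn univ s}.ncard := by
  simp [numMaxIndep, IsMaximumIndepSetOn, indepNum_eq_indepNumOn_univ]

theorem numMaxIndep_le_of_forall_disjoint [Fintype V] [DecidableEq V] (X : Finset V)
    (hX : ∀ s, G.IsMaximumIndepSetOn univ s → Disjoint X s) :
    numMaxIndep G ≤ 2 ^ (Fintype.card V - _root_.indepNum G - #X) := by
  obtain ⟨r, hr⟩ := G.exists_isMaximumIndepSetOn univ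
  have hD : #((univ \ r) \ X) = Fintype.card V - G.indepNumOn univ - #X := by
    have hXr : X ⊆ univ \ r := fun x hx =>
      mem_sdiff.mpr ⟨mem_univ x, Finset.disjoint_left.mp (hX r hr) hx⟩
    rw [card_sdiff_of_subset hXr, card_sdiff_of_subset (subset_univ r), card_univ, hr.2.2]
  rw [numMaxIndep_eq_ncard, indepNum_eq_indepNumOn_univ, ← hD, ← card_powerset,
    ← Set.ncard_coe_finset]
  refine Set.ncard_le_ncard_of_injOn (· \ r) (fun s hs => ?_)
    (injOn_sdiff_isMaximumIndepSetOn hr.2.1) (finite_toSet _)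
  simp only [coe_powerset, Set.mem_preimage, Set.mem_powerset_iff, coe_subset]
  intro x hx
  obtain ⟨hxs, hxr⟩ := mem_sdiff.mp hx
  exact mem_sdiff.mpr ⟨mem_sdiff.mpr ⟨mem_univ x, hxr⟩, Finset.disjoint_right.mp (hX s hs) hxs⟩

end SimpleGraph

theorem stmt5 {V : Type*} [Fintype V] (T : SimpleGraph V) (hT : T.IsTree) (n α : ℕ)
    (hn : Fintype.card V = n) (hα : _root_.indepNum T = α) (h : 2 * α > n) :
    numMaxIndep T ≤ 2 ^ (n - α - 1) := by
  classical
  subst hn hα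
  have hα_le : _root_.indepNum T ≤ Fintype.card V := by
    simpa [T.indepNum_eq_indepNumOn_univ] using T.indepNumOn_le_card univ
  obtain ⟨u, -, hu⟩ := hT.isAcyclic.exists_mem_forall_isMaximumIndepSetOn univ
    (by rwa [card_univ, ← T.indepNum_eq_indepNumOn_univ])
  rcases subsingleton_or_nontrivial V with hV | hV
  · have := Fintype.card_le_one_iff_subsingleton.mpr hV
    calc numMaxIndep T ≤ 2 ^ (Fintype.card V - _root_.indepNum T - #(∅ : Finset V)) :=
          T.numMaxIndep_le_of_forall_disjoint ∅ fun s _ => disjoint_empty_left s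
      _ = 2 ^ (Fintype.card V - _root_.indepNum T - 1) := by rw [card_empty]; congr 1; omega
  · obtain ⟨v, huv⟩ := hT.connected.preconnected.exists_adj_of_nontrivial u
    simpa using T.numMaxIndep_le_of_forall_disjoint {v} fun s hs =>
      disjoint_singleton_left.mpr fun hvs => hs.2.1 (hu s hs) hvs huv.ne huv
end

section
/- If T is a tree of order n ≥ 2, then the number of maximum independent sets of T is at most 2^((n−2)/2) + 1 when n is even, and at most 2^((n−3)/2) when n is odd. -/
open SimpleGraph

/-!
By König's theorem for forests a tree has a matching `M` and an independent set `I` with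
`|M| + |I| = n`. Hence every maximum independent set contains each vertex missed by `M` and exactly
one endpoint of each edge of `M`, so it is determined by a choice of endpoint in each of the
`μ = |M|` edges of `M`. If `M` misses a vertex `u`, the choice on the edge through a neighbour of
`u` is forced, which leaves at most `2^(μ-1)` sets, with `2μ < n`. If `M` is perfect, complements of
maximum independent sets are such choices too, and a set and its complement are both independent
only for the two sides of the bipartition. So twice the number of maximum independent sets is
at most `2^μ + 2`, with `2μ = n`.
-/

open Finset

section

variable {V : Type*}

/-- `Iᶜ` is a transversal of the pairs in `M`: it consists of exactly one vertex of each pair. -/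
structure IsTransversalCompl (M : Finset (V × V)) (I : Finset V) : Prop where
  fst_mem_iff : ∀ p ∈ M, p.1 ∈ I ↔ p.2 ∉ I
  exists_of_notMem : ∀ v ∉ I, ∃ p ∈ M, v = p.1 ∨ v = p.2

namespace IsTransversalCompl

variable {M : Finset (V × V)} {I J : Finset V}

theorem eq_of_forall_fst_mem_iff (hI : IsTransversalCompl M I) (hJ : IsTransversalCompl M J)
    (h : ∀ p ∈ M, p.1 ∈ I ↔ p.1 ∈ J) : I = J := by
  have key : ∀ {I J : Finset V}, IsTransversalCompl M I → IsTransversalCompl M J →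
      (∀ p ∈ M, p.1 ∈ I ↔ p.1 ∈ J) → I ⊆ J := by
    intro I J hI hJ h v hvI
    by_contra hvJ
    obtain ⟨p, hp, rfl | rfl⟩ := hJ.exists_of_notMem v hvJ
    · exact hvJ ((h p hp).1 hvI)
    · exact (hI.fst_mem_iff p hp).1 ((h p hp).2 ((hJ.fst_mem_iff p hp).2 hvJ)) hvI
  exact (key hI hJ h).antisymm (key hJ hI fun p hp => (h p hp).symm)

theorem compl [Fintype V] [DecidableEq V] (hI : IsTransversalCompl M I)
    (hM : ∀ v, ∃ p ∈ M, v = p.1 ∨ v = p.2) : IsTransversalCompl M Iᶜ where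
  fst_mem_iff p hp := by
    simp only [mem_compl, not_not]
    have := hI.fst_mem_iff p hp
    tauto
  exists_of_notMem v _ := hM v

end IsTransversalCompl

/-- `I ↦ {p ∈ N | p.1 ∈ I}` is injective on the family, as a transversal complement is
determined by the first coordinates it contains. -/
theorem card_le_two_pow_of_isTransversalCompl [DecidableEq V] {M N : Finset (V × V)}
    {𝓘 : Finset (Finset V)} (h𝓘 : ∀ I ∈ 𝓘, IsTransversalCompl M I)
    (hN : ∀ I ∈ 𝓘, ∀ J ∈ 𝓘, ∀ p ∈ M, p ∉ N → (p.1 ∈ I ↔ p.1 ∈ J)) :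
    #𝓘 ≤ 2 ^ #N := by
  rw [← card_powerset]
  refine card_le_card_of_injOn (fun I => N.filter (·.1 ∈ I))
    (fun I _ => mem_powerset.2 (filter_subset _ _)) ?_
  intro I hI J hJ hIJ
  refine (h𝓘 I hI).eq_of_forall_fst_mem_iff (h𝓘 J hJ) fun p hp => ?_
  by_cases hpN : p ∈ N
  · simpa [hpN] using congrArg (p ∈ ·) hIJ
  · exact hN I hI J hJ p hp hpN

namespace SimpleGraph

variable {G H : SimpleGraph V}

/-- A matching of `G`, each edge listed as an ordered pair. -/
structure IsPairMatching (G : SimpleGraph V) [DecidableEq V] (M : Finset (V × V)) : Prop where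
  adj : ∀ p ∈ M, G.Adj p.1 p.2
  pairwiseDisjoint : (M : Set (V × V)).PairwiseDisjoint fun p => ({p.1, p.2} : Finset V)

namespace IsPairMatching

variable [DecidableEq V] {M : Finset (V × V)}

theorem mono (hM : G.IsPairMatching M) (hGH : G ≤ H) : H.IsPairMatching M :=
  ⟨fun p hp => hGH (hM.adj p hp), hM.pairwiseDisjoint⟩

theorem insert (hM : G.IsPairMatching M) {x y : V} (hxy : G.Adj x y)
    (hxyM : ∀ p ∈ M, Disjoint ({x, y} : Finset V) {p.1, p.2}) :
    G.IsPairMatching (insert (x, y) M) where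
  adj p hp := by
    obtain rfl | hp := mem_insert.1 hp
    exacts [hxy, hM.adj p hp]
  pairwiseDisjoint := by
    rw [coe_insert]
    exact hM.pairwiseDisjoint.insert fun p hp _ => hxyM p hp

theorem card_biUnion (hM : G.IsPairMatching M) :
    #(M.biUnion fun p => ({p.1, p.2} : Finset V)) = 2 * #M := by
  rw [Finset.card_biUnion hM.pairwiseDisjoint, mul_comm, ← smul_eq_mul, ← sum_const]
  exact sum_congr rfl fun p hp => card_pair (hM.adj p hp).ne

/-- Choosing from each pair a vertex outside `I` injects `M` into `Iᶜ`; under `hcard` it is a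
bijection. -/
theorem isTransversalCompl [Fintype V] (hM : G.IsPairMatching M) {I : Finset V}
    (hI : G.IsIndepSet (I : Set V)) (hcard : Fintype.card V ≤ #M + #I) :
    IsTransversalCompl M I := by
  set c : V × V → V := fun p => if p.1 ∈ I then p.2 else p.1
  have hc : ∀ p, c p ∈ ({p.1, p.2} : Finset V) := fun p => by
    by_cases h : p.1 ∈ I <;> simp [c, h]
  have hcI : ∀ p ∈ M, c p ∉ I := fun p hp => by
    by_cases h : p.1 ∈ I
    · simpa [c, h] using fun h2 => hI h h2 (hM.adj p hp).ne (hM.adj p hp)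
    · simp [c, h]
  have hinj : Set.InjOn c M := fun p hp q hq hpq =>
    hM.pairwiseDisjoint.elim_finset hp hq (c p) (hc p) (hpq ▸ hc q)
  have himage : M.image c = Iᶜ := by
    refine eq_of_subset_of_card_le (fun v hv => ?_) ?_
    · obtain ⟨p, hp, rfl⟩ := mem_image.1 hv
      exact mem_compl.2 (hcI p hp)
    · rw [card_image_of_injOn hinj, card_compl]
      omega
  have hmem : ∀ v ∉ I, ∃ p ∈ M, c p = v := fun v hv =>
    mem_image.1 (himage ▸ mem_compl.2 hv)
  refine ⟨fun p hp => ⟨fun h1 h2 => hI h1 h2 (hM.adj p hp).ne (hM.adj p hp), fun h2 => ?_⟩,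
    fun v hv => ?_⟩
  · by_contra h1
    obtain ⟨q, hq, hqp⟩ := hmem p.2 h2
    obtain rfl := hM.pairwiseDisjoint.elim_finset hq hp p.2 (hqp ▸ hc q) (by simp)
    simp only [c, h1, if_false] at hqp
    exact (hM.adj q hq).ne hqp
  · obtain ⟨p, hp, rfl⟩ := hmem v hv
    exact ⟨p, hp, by simpa using hc p⟩

end IsPairMatching

theorem IsAcyclic.exists_adj_forall_adj_eq [Finite V] (hG : G.IsAcyclic) {a b : V}
    (hab : G.Adj a b) : ∃ x y, G.Adj x y ∧ ∀ z, G.Adj x z → z = y := by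
  have : Nonempty V := ⟨a⟩
  obtain ⟨u, v, p, hp, hmax⟩ := Walk.exists_isPath_forall_isPath_length_le_length G
  have hnil : ¬p.Nil := fun h => by
    simpa [Walk.length_eq_zero_iff.2 h] using hmax a b (.cons hab .nil) (by simp [hab.ne])
  refine ⟨u, p.snd, p.adj_snd hnil, fun z hz => hG.eq_snd_of_adj_start hp hz ?_⟩
  by_contra hzp
  simpa using hmax _ _ (p.cons hz.symm) (hp.cons hzp)

/-- König's theorem for forests. Induction on `G`: delete the edges at a leaf `x` and at its
neighbour `y`, then add `(x, y)` to the matching and `x` to the independent set. -/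
theorem IsAcyclic.exists_isPairMatching_isIndepSet [Fintype V] [DecidableEq V]
    (hG : G.IsAcyclic) : ∃ (M : Finset (V × V)) (I : Finset V),
      G.IsPairMatching M ∧ G.IsIndepSet (I : Set V) ∧ Fintype.card V ≤ #M + #I := by
  induction G using WellFoundedLT.induction with
  | _ G ih =>
  by_cases hE : ∀ a b, ¬G.Adj a b
  · exact ⟨∅, univ, ⟨by simp, by simp⟩, fun a _ b _ _ => hE a b, by simp⟩
  push Not at hE
  obtain ⟨a, b, hab⟩ := hE
  obtain ⟨x, y, hxy, hleaf⟩ := hG.exists_adj_forall_adj_eq hab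
  set H := (G.deleteIncidenceSet x).deleteIncidenceSet y
  have hH : ∀ {u v}, H.Adj u v ↔
      G.Adj u v ∧ u ∉ ({x, y} : Finset V) ∧ v ∉ ({x, y} : Finset V) := by
    intro u v
    simp only [H, deleteIncidenceSet_adj, mem_insert, mem_singleton]
    tauto
  have hHG : H < G :=
    lt_of_le_of_ne ((deleteIncidenceSet_le _ _).trans (deleteIncidenceSet_le _ _))
      fun h => (hH.1 (h ▸ hxy)).2.1 (by simp)
  obtain ⟨M, I, hM, hI, hcard⟩ := ih H hHG (hG.anti hHG.le)
  have hMxy : ∀ p ∈ M, Disjoint ({x, y} : Finset V) {p.1, p.2} := fun p hp => by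
    have := hH.1 (hM.adj p hp)
    rw [disjoint_comm, disjoint_insert_left, disjoint_singleton_left]
    exact ⟨this.2.1, this.2.2⟩
  refine ⟨insert (x, y) M, insert x (I \ {x, y}), (hM.mono hHG.le).insert hxy hMxy, ?_, ?_⟩
  · rw [isIndepSet_iff, coe_insert, Set.pairwise_insert]
    refine ⟨fun u hu v hv huv hG' => ?_, fun v hv _ => ?_⟩
    · simp only [coe_sdiff, Set.mem_sdiff, mem_coe] at hu hv
      exact hI hu.1 hv.1 huv (hH.2 ⟨hG', hu.2, hv.2⟩)
    · have : v ≠ y := (by simpa using hv : v ∈ I ∧ v ≠ x ∧ v ≠ y).2.2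
      exact ⟨fun hxv => this (hleaf v hxv), fun hvx => this (hleaf v hvx.symm)⟩
  · have h1 : (x, y) ∉ M := fun h => by simpa using hMxy _ h
    have h2 : x ∉ I \ {x, y} := by simp
    rw [card_insert_of_notMem h1, card_insert_of_notMem h2]
    have := card_le_card_sdiff_add_card (s := I) (t := {x, y})
    have := card_le_two (a := x) (b := y)
    omega

theorem Preconnected.eq_of_forall_adj_mem_iff (hG : G.Preconnected) {I J : Finset V}
    (hI : ∀ a b, G.Adj a b → (a ∈ I ↔ b ∉ I)) (hJ : ∀ a b, G.Adj a b → (a ∈ J ↔ b ∉ J))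
    {v : V} (hv : v ∈ I ↔ v ∈ J) : I = J := by
  ext w
  obtain ⟨p⟩ := hG v w
  induction p with
  | nil => exact hv
  | cons h _ ih => exact ih (by rw [hI _ _ h.symm, hJ _ _ h.symm, hv])

theorem Connected.card_le_two_of_isIndepSet_compl [Fintype V] [DecidableEq V]
    (hG : G.Connected) {𝓘 : Finset (Finset V)}
    (h𝓘 : ∀ I ∈ 𝓘, G.IsIndepSet (I : Set V) ∧ G.IsIndepSet (↑Iᶜ : Set V)) : #𝓘 ≤ 2 := by
  obtain ⟨v⟩ := hG.nonempty
  have hside : ∀ I ∈ 𝓘, ∀ a b, G.Adj a b → (a ∈ I ↔ b ∉ I) := by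
    intro I hI a b hab
    refine ⟨fun ha hb => (h𝓘 I hI).1 ha hb hab.ne hab, fun hb => ?_⟩
    by_contra ha
    exact (h𝓘 I hI).2 (by simpa using ha) (by simpa using hb) hab.ne hab
  calc #𝓘 ≤ #(univ : Finset Prop) :=
        card_le_card_of_injOn (v ∈ ·) (fun _ _ => mem_univ _) fun I hI J hJ hIJ =>
          hG.preconnected.eq_of_forall_adj_mem_iff (hside I hI) (hside J hJ) (Iff.of_eq hIJ)
    _ = 2 := by simp

theorem card_le_two_pow_card_sub_one_of_adj [DecidableEq V] {M : Finset (V × V)}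
    {𝓘 : Finset (Finset V)}
    (h𝓘 : ∀ I ∈ 𝓘, G.IsIndepSet (I : Set V) ∧ IsTransversalCompl M I) {u w : V}
    (hu : ¬∃ p ∈ M, u = p.1 ∨ u = p.2) (huw : G.Adj u w) : #𝓘 ≤ 2 ^ (#M - 1) := by
  rcases 𝓘.eq_empty_or_nonempty with rfl | ⟨I₀, hI₀⟩
  · simp
  have hwI : ∀ I ∈ 𝓘, w ∉ I := by
    intro I hI hwI
    have huI : u ∈ I := by
      by_contra huI
      exact hu ((h𝓘 I hI).2.exists_of_notMem u huI)
    exact (h𝓘 I hI).1 huI hwI huw.ne huw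
  obtain ⟨p₀, hp₀, hw⟩ := (h𝓘 I₀ hI₀).2.exists_of_notMem w (hwI I₀ hI₀)
  rw [← card_erase_of_mem hp₀]
  refine card_le_two_pow_of_isTransversalCompl (fun I hI => (h𝓘 I hI).2) ?_
  intro I hI J hJ p hp hpN
  obtain rfl : p = p₀ := by simpa [hp] using hpN
  rcases hw with rfl | rfl
  · exact iff_of_false (hwI I hI) (hwI J hJ)
  · exact iff_of_true (((h𝓘 I hI).2.fst_mem_iff p hp).2 (hwI I hI))
      (((h𝓘 J hJ).2.fst_mem_iff p hp).2 (hwI J hJ))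

/-- With a perfect matching, `I ↦ Iᶜ` maps the family into transversal complements as well;
only the two sides of the bipartition can lie in both the family and its image. -/
theorem Connected.card_le_two_pow_card_sub_one_add_one [Fintype V] [DecidableEq V]
    (hG : G.Connected) {M : Finset (V × V)} (hM : ∀ v, ∃ p ∈ M, v = p.1 ∨ v = p.2)
    {𝓘 : Finset (Finset V)}
    (h𝓘 : ∀ I ∈ 𝓘, G.IsIndepSet (I : Set V) ∧ IsTransversalCompl M I) :
    #𝓘 ≤ 2 ^ (#M - 1) + 1 := by
  set 𝓒 := 𝓘.image compl
  have hunion : #(𝓘 ∪ 𝓒) ≤ 2 ^ #M := by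
    refine card_le_two_pow_of_isTransversalCompl (fun I hI => ?_)
      fun _ _ _ _ p hp hpM => absurd hp hpM
    rcases mem_union.1 hI with hI | hI
    · exact (h𝓘 I hI).2
    · obtain ⟨J, hJ, rfl⟩ := mem_image.1 hI
      exact (h𝓘 J hJ).2.compl hM
  have hinter : #(𝓘 ∩ 𝓒) ≤ 2 := by
    refine hG.card_le_two_of_isIndepSet_compl fun I hI => ?_
    obtain ⟨hI, hI'⟩ := mem_inter.1 hI
    obtain ⟨J, hJ, rfl⟩ := mem_image.1 hI'
    exact ⟨(h𝓘 _ hI).1, by simpa using (h𝓘 J hJ).1⟩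
  have h𝓒 : #𝓒 = #𝓘 := card_image_of_injective _ compl_injective
  have hpow : 2 ^ #M ≤ 2 * 2 ^ (#M - 1) := by
    rcases Nat.eq_zero_or_pos #M with h | h
    · simp [h]
    · rw [← pow_succ', Nat.sub_add_cancel h]
  have := card_union_add_card_inter 𝓘 𝓒
  omega

end SimpleGraph

theorem indepNum_eq_simpleGraph_indepNum (G : SimpleGraph V) :
    _root_.indepNum G = G.indepNum := by
  simp only [_root_.indepNum, SimpleGraph.indepNum, isNIndepSet_iff]
  rfl

theorem numMaxIndep_eq_card [Fintype V] [DecidableEq V] (G : SimpleGraph V) [DecidableRel G.Adj] :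
    numMaxIndep G = #(G.indepSetFinset G.indepNum) := by
  rw [numMaxIndep, ← Set.ncard_coe_finset]
  congr 1
  ext I
  simp [isNIndepSet_iff, IsIndepSet', indepNum_eq_simpleGraph_indepNum, isIndepSet_iff]

end

theorem stmt7 {V : Type*} [Fintype V] (T : SimpleGraph V) (hT : T.IsTree) (n : ℕ)
    (hn : Fintype.card V = n) (h2 : 2 ≤ n) :
    (Even n → numMaxIndep T ≤ 2 ^ ((n - 2) / 2) + 1) ∧
    (Odd n → numMaxIndep T ≤ 2 ^ ((n - 3) / 2)) := by
  classical
  subst hn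
  obtain ⟨M, I₀, hM, hI₀, hcard⟩ := hT.isAcyclic.exists_isPairMatching_isIndepSet
  have h𝓘 : ∀ I ∈ T.indepSetFinset T.indepNum,
      T.IsIndepSet (I : Set V) ∧ IsTransversalCompl M I := by
    intro I hI
    obtain ⟨hI, hIcard⟩ := mem_indepSetFinset_iff.1 hI
    have := hI₀.card_le_indepNum
    exact ⟨hI, hM.isTransversalCompl hI (by omega)⟩
  set U := M.biUnion fun p => ({p.1, p.2} : Finset V)
  have hU : ∀ v, v ∈ U ↔ ∃ p ∈ M, v = p.1 ∨ v = p.2 := by simp [U]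
  have hUcard : #U = 2 * #M := hM.card_biUnion
  rw [numMaxIndep_eq_card, Nat.even_iff, Nat.odd_iff]
  rcases (card_le_univ U).lt_or_eq with hlt | heq
  · obtain ⟨u, -, hu⟩ := exists_mem_notMem_of_card_lt_card (s := U) (t := univ)
      (by rwa [card_univ])
    have : Nontrivial V := Fintype.one_lt_card_iff_nontrivial.1 (by omega)
    obtain ⟨w, huw⟩ := hT.1.preconnected.exists_adj_of_nontrivial u
    have hle := card_le_two_pow_card_sub_one_of_adj h𝓘 (fun h => hu ((hU u).2 h)) huw
    exact ⟨fun _ => hle.trans (le_add_right (Nat.pow_le_pow_right two_pos (by omega))),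
      fun _ => hle.trans (Nat.pow_le_pow_right two_pos (by omega))⟩
  · have hle := hT.1.card_le_two_pow_card_sub_one_add_one
      (fun v => (hU v).1 (eq_univ_of_card U heq ▸ mem_univ v)) h𝓘
    exact ⟨fun _ => by rwa [show (Fintype.card V - 2) / 2 = #M - 1 by omega], fun _ => by omega⟩
end

section
/- A subcubic tree T of order n has independence number equal to (2n+1)/3 if and only if T arises from a single vertex by iteratively attaching paths P_3: attaching a P_3 to a tree T0 means adding three new vertices x, y, z with edges uy, xy, yz for some vertex u of T0. -/
open SimpleGraph

/-- Attaching a path `P_3` with new vertices `x = inr 0`, `y = inr 1`, `z = inr 2`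
to the vertex `u` of `G`, adding the edges `uy`, `xy`, and `yz`. -/
def attachP3 {V : Type} (G : SimpleGraph V) (u : V) : SimpleGraph (V ⊕ Fin 3) :=
  SimpleGraph.fromRel (fun a b =>
    (∃ x y : V, a = Sum.inl x ∧ b = Sum.inl y ∧ G.Adj x y) ∨
    (a = Sum.inl u ∧ b = Sum.inr 1) ∨
    (a = Sum.inr 0 ∧ b = Sum.inr 1) ∨
    (a = Sum.inr 1 ∧ b = Sum.inr 2))

/-- The graphs arising from a single vertex by iteratively attaching `P_3`s. -/
inductive BuiltByP3 : ∀ (V : Type), SimpleGraph V → Prop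
  | base : BuiltByP3 PUnit ⊥
  | step {V : Type} (G : SimpleGraph V) (u : V) (h : BuiltByP3 V G) :
      BuiltByP3 (V ⊕ Fin 3) (attachP3 G u)

/-!
Attaching a `P₃` adds three vertices and raises the independence number by exactly two (an
independent set meets `x, y, z` in at most two vertices, and `{x, z}` is always available), so
every tree built from a single vertex satisfies `3α = 2n + 1`.

Conversely, let `S` be a maximum independent set of a subcubic tree with `3α = 2n + 1` and `C`
its complement, so that the tree has `n - 1 = 3|C|` edges. Every edge meets `C` and every vertex
of `C` has degree at most three, so double counting the incidences between `C` and the edges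
forces every vertex of `C` to have degree three and every edge to have exactly one end in `C`.
In such a tree, a vertex `y ∈ C` farthest from a root has at most one neighbour closer to the
root, and its farther neighbours are leaves; so `y` carries two leaves `x, z` and one further
neighbour `u`. Deleting `x, y, z` leaves a smaller tree of the same kind, from which the original
one arises by attaching a `P₃` at `u`.
-/

lemma indepNum_eq_indepNum {V : Type*} (G : SimpleGraph V) :
    _root_.indepNum G = G.indepNum := by
  simp only [_root_.indepNum, SimpleGraph.indepNum, isNIndepSet_iff]
  rfl

namespace SimpleGraph

section Iso

variable {V W : Type*} {G : SimpleGraph V} {H : SimpleGraph W}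

lemma Iso.isNIndepSet_map (e : G ≃g H) {n : ℕ} {s : Finset V} (hs : G.IsNIndepSet n s) :
    H.IsNIndepSet n (s.map e.toEmbedding.toEmbedding) := by
  refine ⟨?_, by simp [hs.card_eq]⟩
  rintro _ ha _ hb hab
  simp only [Finset.coe_map, Set.mem_image, Finset.mem_coe] at ha hb
  obtain ⟨a, ha, rfl⟩ := ha
  obtain ⟨b, hb, rfl⟩ := hb
  simpa [e.map_adj_iff] using hs.isIndepSet ha hb (ne_of_apply_ne _ hab)

lemma Iso.indepNum_eq (e : G ≃g H) : G.indepNum = H.indepNum := by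
  unfold indepNum
  congr 1
  ext n
  exact ⟨fun ⟨_, hs⟩ ↦ ⟨_, e.isNIndepSet_map hs⟩, fun ⟨_, hs⟩ ↦ ⟨_, e.symm.isNIndepSet_map hs⟩⟩

end Iso

variable {V : Type*} {G T : SimpleGraph V}

lemma ncard_neighborSet_eq_degree (v : V) [Fintype (G.neighborSet v)] :
    (G.neighborSet v).ncard = G.degree v := by
  rw [← Nat.card_coe_set_eq, Nat.card_eq_fintype_card, card_neighborSet_eq_degree]

lemma Walk.IsPath.notMem_support_of_subsingleton {a b v : V} {p : G.Walk a b} (hp : p.IsPath)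
    (ha : v ≠ a) (hb : v ≠ b) (hv : {w ∈ G.neighborSet v | w ∈ p.support}.Subsingleton) :
    v ∉ p.support := by
  intro hmem
  obtain ⟨i, rfl, hi⟩ := mem_support_iff_exists_getVert.1 hmem
  have hi₀ : i ≠ 0 := by rintro rfl; exact ha p.getVert_zero
  have hil : i < p.length := lt_of_le_of_ne hi (by rintro rfl; exact hb p.getVert_length)
  have hsub : p.toSubgraph.neighborSet (p.getVert i) ⊆
      {w ∈ G.neighborSet (p.getVert i) | w ∈ p.support} := fun w hw ↦
    ⟨hw.adj_sub, p.mem_verts_toSubgraph.1 hw.snd_mem⟩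
  have := hp.ncard_neighborSet_toSubgraph_internal_eq_two hi₀ hil
  have := (Set.ncard_le_one p.finite_neighborSet_toSubgraph).2 (hv.anti hsub)
  omega

lemma IsTree.eq_of_adj_of_dist_add_one (hT : T.IsTree) {r v₁ v₂ w : V} (h₁ : T.Adj v₁ w)
    (h₂ : T.Adj v₂ w) (hd₁ : T.dist r v₁ + 1 = T.dist r w) (hd₂ : T.dist r v₂ + 1 = T.dist r w) :
    v₁ = v₂ := by
  obtain ⟨q₁, hq₁⟩ := hT.connected.exists_walk_length_eq_dist r v₁
  obtain ⟨q₂, hq₂⟩ := hT.connected.exists_walk_length_eq_dist r v₂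
  have hp₁ := (q₁.concat h₁).isPath_of_length_eq_dist (by simp [hq₁, hd₁])
  have hp₂ := (q₂.concat h₂).isPath_of_length_eq_dist (by simp [hq₂, hd₂])
  have := congrArg Walk.penultimate ((hT.existsUnique_path r w).unique hp₁ hp₂)
  simpa [Walk.penultimate_concat] using this

end SimpleGraph

section attachP3

variable {V : Type} {G : SimpleGraph V} {u : V}

@[simp] lemma attachP3_adj_inl_inl {a b : V} :
    (attachP3 G u).Adj (.inl a) (.inl b) ↔ G.Adj a b := by
  simpa [attachP3, G.adj_comm b a] using G.ne_of_adj

@[simp] lemma attachP3_adj_inl_inr {a : V} {i : Fin 3} :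
    (attachP3 G u).Adj (.inl a) (.inr i) ↔ a = u ∧ i = 1 := by
  simp [attachP3]

@[simp] lemma attachP3_adj_inr_inl {a : V} {i : Fin 3} :
    (attachP3 G u).Adj (.inr i) (.inl a) ↔ a = u ∧ i = 1 := by
  rw [adj_comm, attachP3_adj_inl_inr]

@[simp] lemma attachP3_adj_inr_inr {i j : Fin 3} :
    (attachP3 G u).Adj (.inr i) (.inr j) ↔
      (i = 0 ∧ j = 1) ∨ (i = 1 ∧ j = 0) ∨ (i = 1 ∧ j = 2) ∨ (i = 2 ∧ j = 1) := by
  fin_cases i <;> fin_cases j <;> simp [attachP3]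

def SimpleGraph.Iso.attachP3Congr {W : Type} {H : SimpleGraph W} (e : G ≃g H) (u : V) :
    attachP3 G u ≃g attachP3 H (e u) where
  toEquiv := e.toEquiv.sumCongr (Equiv.refl (Fin 3))
  map_rel_iff' := by
    rintro (a | i) (b | j) <;> simp [e.map_adj_iff, EmbeddingLike.apply_eq_iff_eq]

open Finset in
lemma indepNum_attachP3 [Finite V] (G : SimpleGraph V) (u : V) :
    (attachP3 G u).indepNum = G.indepNum + 2 := by
  apply le_antisymm
  · obtain ⟨s, hs⟩ := (attachP3 G u).exists_isNIndepSet_indepNum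
    have hleft : G.IsIndepSet s.toLeft := fun a ha b hb hab ↦ by
      simpa using hs.isIndepSet (mem_toLeft.1 ha) (mem_toLeft.1 hb) (by simpa using hab)
    have hpath : ∀ t : Finset (Fin 3), (1 ∈ t → 0 ∉ t ∧ 2 ∉ t) → #t ≤ 2 := by decide
    have hright : #s.toRight ≤ 2 := hpath _ fun h1 ↦ by
      refine ⟨fun h0 ↦ ?_, fun h2 ↦ ?_⟩
      · exact hs.isIndepSet (mem_toRight.1 h0) (mem_toRight.1 h1) (by simp) (by simp)
      · exact hs.isIndepSet (mem_toRight.1 h1) (mem_toRight.1 h2) (by simp) (by simp)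
    rw [← hs.card_eq, ← card_toLeft_add_card_toRight]
    exact add_le_add hleft.card_le_indepNum hright
  · obtain ⟨s, hs⟩ := G.exists_isNIndepSet_indepNum
    have hindep : (attachP3 G u).IsIndepSet ↑(s.disjSum ({0, 2} : Finset (Fin 3))) := by
      rintro (a | i) ha (b | j) hb hab <;> simp at ha hb
      · simpa using hs.isIndepSet ha hb (by simpa using hab)
      · rcases hb with rfl | rfl <;> simp
      · rcases ha with rfl | rfl <;> simp
      · rcases ha with rfl | rfl <;> rcases hb with rfl | rfl <;> simp_all
    simpa [hs.card_eq] using hindep.card_le_indepNum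

end attachP3

lemma indepNum_bot_punit : (⊥ : SimpleGraph PUnit).indepNum = 1 := by
  apply le_antisymm
  · obtain ⟨s, hs⟩ := (⊥ : SimpleGraph PUnit).exists_isNIndepSet_indepNum
    simpa [hs.card_eq] using s.card_le_univ
  · exact IsIndepSet.card_le_indepNum (G := (⊥ : SimpleGraph PUnit)) (t := Finset.univ)
      fun _ _ _ _ _ h ↦ h

namespace BuiltByP3

variable {W : Type} {G : SimpleGraph W}

lemma finite (h : BuiltByP3 W G) : Finite W := by
  induction h with
  | base => infer_instance
  | step _ _ _ ih => infer_instance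

lemma three_mul_indepNum (h : BuiltByP3 W G) : 3 * G.indepNum = 2 * Nat.card W + 1 := by
  induction h with
  | base => simp [indepNum_bot_punit]
  | step G u h ih =>
    have := h.finite
    rw [indepNum_attachP3, Nat.card_sum, Nat.card_eq_fintype_card (α := Fin 3), Fintype.card_fin]
    omega

end BuiltByP3

namespace SimpleGraph

variable {V : Type*} {T : SimpleGraph V} {C : Set V}

structure IsCubicSide (T : SimpleGraph V) (C : Set V) : Prop where
  mem_iff_notMem_of_adj : ∀ ⦃a b⦄, T.Adj a b → (a ∈ C ↔ b ∉ C)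
  ncard_neighborSet_eq : ∀ c ∈ C, (T.neighborSet c).ncard = 3

open Finset in
lemma IsTree.exists_isCubicSide [Fintype V] (hT : T.IsTree)
    (hsub : ∀ v, (T.neighborSet v).ncard ≤ 3)
    (h : 3 * T.indepNum = 2 * Fintype.card V + 1) : ∃ C, T.IsCubicSide C := by
  classical
  obtain ⟨S, hS⟩ := T.exists_isNIndepSet_indepNum
  set C := Sᶜ
  set E := T.edgeFinset
  have hdeg : ∀ c, #{e ∈ E | c ∈ e} = (T.neighborSet c).ncard := fun c ↦ by
    rw [← incidenceFinset_eq_filter, card_incidenceFinset_eq_degree, ncard_neighborSet_eq_degree]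
  have hcover : ∀ e ∈ E, 1 ≤ #{c ∈ C | c ∈ e} := fun e he ↦ by
    obtain ⟨v, hvC, hve⟩ := hS.isIndepSet.nonempty_mem_compl_mem_edge _ (mem_edgeFinset.1 he)
    exact one_le_card.2 ⟨v, mem_filter.2 ⟨by simpa [C] using hvC, hve⟩⟩
  have hcard : #E = 3 * #C := by
    have hE : #E + 1 = Fintype.card V := hT.card_edgeFinset
    rw [card_compl, hS.card_eq]
    omega
  -- Both ends of the double count are `#E`, so every inequality along the way is tight.
  have hdouble : ∑ c ∈ C, #{e ∈ E | c ∈ e} = ∑ e ∈ E, #{c ∈ C | c ∈ e} :=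
    sum_card_bipartiteAbove_eq_sum_card_bipartiteBelow _
  have hle₁ : ∀ c ∈ C, #{e ∈ E | c ∈ e} ≤ 3 := fun c _ ↦ (hdeg c).trans_le (hsub c)
  have hle₂ : ∑ c ∈ C, #{e ∈ E | c ∈ e} ≤ ∑ c ∈ C, 3 := sum_le_sum hle₁
  have hle₃ : ∑ e ∈ E, 1 ≤ ∑ e ∈ E, #{c ∈ C | c ∈ e} := sum_le_sum hcover
  simp only [sum_const, smul_eq_mul, mul_one] at hle₂ hle₃
  have hdeg3 : ∀ c ∈ C, #{e ∈ E | c ∈ e} = 3 :=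
    (sum_eq_sum_iff_of_le hle₁).1 (by simp only [sum_const, smul_eq_mul]; omega)
  have hhit : ∀ e ∈ E, #{c ∈ C | c ∈ e} = 1 := fun e he ↦
    ((sum_eq_sum_iff_of_le hcover).1 (by simp only [sum_const, smul_eq_mul]; omega) e he).symm
  refine ⟨C, fun a b hab ↦ ?_, fun c hc ↦ (hdeg c).symm.trans (hdeg3 c hc)⟩
  have not_both : ¬(a ∈ C ∧ b ∈ C) := fun ⟨ha, hb⟩ ↦ by
    have hsub : {a, b} ⊆ {c ∈ C | c ∈ s(a, b)} := by
      simp [insert_subset_iff, ha, hb]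
    have := card_le_card hsub
    rw [card_pair hab.ne, hhit _ (mem_edgeFinset.2 hab)] at this
    omega
  have not_neither : ¬(a ∉ C ∧ b ∉ C) := fun ⟨ha, hb⟩ ↦
    hS.isIndepSet (by simpa [C] using ha) (by simpa [C] using hb) hab.ne hab
  simp only [mem_coe]
  tauto

lemma IsCubicSide.induce {s : Set V} (hC : T.IsCubicSide C)
    (hs : ∀ c ∈ C, c ∈ s → T.neighborSet c ⊆ s) :
    (T.induce s).IsCubicSide (Subtype.val ⁻¹' C) where
  mem_iff_notMem_of_adj _ _ hab := hC.mem_iff_notMem_of_adj hab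
  ncard_neighborSet_eq c hc := by
    rw [neighborSet_induce, Set.ncard_preimage_of_injective_subset_range Subtype.val_injective
      (by simpa using hs c hc c.2)]
    exact hC.ncard_neighborSet_eq c hc

structure IsPendantP3 (T : SimpleGraph V) (x y z u : V) : Prop where
  neighborSet_left : T.neighborSet x = {y}
  neighborSet_right : T.neighborSet z = {y}
  neighborSet_center : T.neighborSet y = {x, z, u}
  left_ne_right : x ≠ z
  left_ne_attach : x ≠ u
  right_ne_attach : z ≠ u

namespace IsPendantP3

variable {x y z u : V}

lemma adj_left_iff (h : T.IsPendantP3 x y z u) {v : V} : T.Adj x v ↔ v = y := by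
  rw [← mem_neighborSet, h.neighborSet_left, Set.mem_singleton_iff]

lemma adj_right_iff (h : T.IsPendantP3 x y z u) {v : V} : T.Adj z v ↔ v = y := by
  rw [← mem_neighborSet, h.neighborSet_right, Set.mem_singleton_iff]

lemma adj_center_iff (h : T.IsPendantP3 x y z u) {v : V} :
    T.Adj y v ↔ v = x ∨ v = z ∨ v = u := by
  rw [← mem_neighborSet, h.neighborSet_center]
  rfl

lemma left_ne_center (h : T.IsPendantP3 x y z u) : x ≠ y := (h.adj_left_iff.2 rfl).ne

lemma right_ne_center (h : T.IsPendantP3 x y z u) : z ≠ y := (h.adj_right_iff.2 rfl).ne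

lemma attach_mem_compl (h : T.IsPendantP3 x y z u) : u ∈ ({x, y, z} : Set V)ᶜ := by
  have := (h.adj_center_iff (v := u)).2 (by simp)
  simp [this.ne', h.left_ne_attach.symm, h.right_ne_attach.symm]

lemma neighborSet_subset_compl {c : V} (h : T.IsPendantP3 x y z u)
    (hc : c ∈ ({x, y, z} : Set V)ᶜ) (hcu : c ≠ u) : T.neighborSet c ⊆ ({x, y, z} : Set V)ᶜ := by
  simp only [Set.mem_compl_iff, Set.mem_insert_iff, Set.mem_singleton_iff, not_or] at hc
  rintro w hcw (rfl | rfl | rfl)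
  · exact hc.2.1 (h.adj_left_iff.1 hcw.symm)
  · exact (h.adj_center_iff.1 hcw.symm).elim hc.1 (Or.elim · hc.2.2 hcu)
  · exact hc.2.1 (h.adj_right_iff.1 hcw.symm)

lemma connected_induce_compl (h : T.IsPendantP3 x y z u) (hT : T.Connected) :
    (T.induce ({x, y, z} : Set V)ᶜ).Connected := by
  have : Nonempty ↥({x, y, z} : Set V)ᶜ := ⟨⟨u, h.attach_mem_compl⟩⟩
  refine ⟨fun ⟨a, ha⟩ ⟨b, hb⟩ ↦ ?_⟩
  simp only [Set.mem_compl_iff, Set.mem_insert_iff, Set.mem_singleton_iff, not_or] at ha hb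
  obtain ⟨p, hp⟩ := (hT a b).exists_isPath
  have hx : x ∉ p.support := hp.notMem_support_of_subsingleton (Ne.symm ha.1) (Ne.symm hb.1)
    ((h.neighborSet_left ▸ Set.subsingleton_singleton).anti (Set.sep_subset _ _))
  have hz : z ∉ p.support := hp.notMem_support_of_subsingleton (Ne.symm ha.2.2) (Ne.symm hb.2.2)
    ((h.neighborSet_right ▸ Set.subsingleton_singleton).anti (Set.sep_subset _ _))
  have hy : y ∉ p.support := hp.notMem_support_of_subsingleton (Ne.symm ha.2.1) (Ne.symm hb.2.1)
    (Set.subsingleton_singleton.anti fun w ⟨hw, hws⟩ ↦ by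
      obtain hw | hw | hw := h.adj_center_iff.1 hw
      exacts [absurd (hw ▸ hws) hx, absurd (hw ▸ hws) hz, hw])
  refine ⟨p.induce _ fun v hv ↦ ?_⟩
  simp only [Set.mem_compl_iff, Set.mem_insert_iff, Set.mem_singleton_iff, not_or]
  exact ⟨fun e ↦ hx (e ▸ hv), fun e ↦ hy (e ▸ hv), fun e ↦ hz (e ▸ hv)⟩

noncomputable def isoAttachP3 {V : Type} {T : SimpleGraph V} {x y z u : V}
    (h : T.IsPendantP3 x y z u) :
    T ≃g attachP3 (T.induce ({x, y, z} : Set V)ᶜ) ⟨u, h.attach_mem_compl⟩ := by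
  have hxy := h.left_ne_center
  have hzy := h.right_ne_center
  have hxz := h.left_ne_right
  have hu := h.attach_mem_compl
  simp only [Set.mem_compl_iff, Set.mem_insert_iff, Set.mem_singleton_iff, not_or] at hu
  let f : ↥({x, y, z} : Set V)ᶜ ⊕ Fin 3 → V := Sum.elim Subtype.val ![x, y, z]
  have hf : f.Bijective := by
    refine ⟨Subtype.val_injective.sumElim ?_ ?_, fun v ↦ ?_⟩
    · intro i j
      fin_cases i <;> fin_cases j <;> simp [hxy, hxz, hzy, hxy.symm, hxz.symm, hzy.symm]
    · rintro ⟨a, ha⟩ i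
      simp only [Set.mem_compl_iff, Set.mem_insert_iff, Set.mem_singleton_iff, not_or] at ha
      fin_cases i <;> simp [ha.1, ha.2.1, ha.2.2]
    · by_cases hv : v ∈ ({x, y, z} : Set V)ᶜ
      · exact ⟨.inl ⟨v, hv⟩, rfl⟩
      · simp only [Set.mem_compl_iff, Set.mem_insert_iff, Set.mem_singleton_iff, not_or,
          not_and_or, not_not] at hv
        rcases hv with rfl | rfl | rfl
        exacts [⟨.inr 0, rfl⟩, ⟨.inr 1, rfl⟩, ⟨.inr 2, rfl⟩]
  have hx {v} : T.Adj v x ↔ v = y := by rw [adj_comm]; exact h.adj_left_iff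
  have hz {v} : T.Adj v z ↔ v = y := by rw [adj_comm]; exact h.adj_right_iff
  have hy {v} : T.Adj v y ↔ v = x ∨ v = z ∨ v = u := by rw [adj_comm]; exact h.adj_center_iff
  refine Iso.symm ⟨Equiv.ofBijective f hf, ?_⟩
  rintro (⟨a, ha⟩ | i) (⟨b, hb⟩ | j)
  · simp [f]
  · simp only [Set.mem_compl_iff, Set.mem_insert_iff, Set.mem_singleton_iff, not_or] at ha
    fin_cases j <;> simp [f, hx, hy, hz, ha.1, ha.2.1, ha.2.2]
  · simp only [Set.mem_compl_iff, Set.mem_insert_iff, Set.mem_singleton_iff, not_or] at hb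
    fin_cases i <;>
      simp [f, h.adj_left_iff, h.adj_center_iff, h.adj_right_iff, hb.1, hb.2.1, hb.2.2]
  · fin_cases i <;> fin_cases j <;>
      simp [f, h.adj_left_iff, h.adj_center_iff, h.adj_right_iff, hxy, hzy, hxz]

end IsPendantP3

lemma IsCubicSide.neighborSet_eq_singleton_of_farthest (hT : T.IsTree) (hC : T.IsCubicSide C)
    {r y w : V} (hyC : y ∈ C) (hy : ∀ c ∈ C, T.dist r c ≤ T.dist r y) (hyw : T.Adj y w)
    (hw : T.dist r w = T.dist r y + 1) : T.neighborSet w = {y} := by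
  ext c
  refine ⟨fun (hwc : T.Adj w c) ↦ ?_, fun hc ↦ hc ▸ hyw.symm⟩
  have hcC : c ∈ C := by
    have := hC.mem_iff_notMem_of_adj hyw
    have := hC.mem_iff_notMem_of_adj hwc
    tauto
  have := hy c hcC
  rcases hT.dist_eq_dist_add_one_of_adj r hwc with hd | hd
  · exact hT.eq_of_adj_of_dist_add_one (r := r) hwc.symm hyw (by omega) (by omega)
  · omega

lemma IsCubicSide.exists_isPendantP3 [Finite V] (hT : T.IsTree) (hC : T.IsCubicSide C)
    (hne : C.Nonempty) : ∃ x y z u, y ∈ C ∧ T.IsPendantP3 x y z u := by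
  obtain ⟨r⟩ := hT.connected.nonempty
  obtain ⟨y, hyC, hymax⟩ := Set.exists_max_image C (T.dist r) C.toFinite hne
  have hleaf {w} := hC.neighborSet_eq_singleton_of_farthest hT (w := w) hyC hymax
  have hchild : ∀ w₁ w₂, T.Adj y w₁ → T.Adj y w₂ → w₁ ≠ w₂ →
      T.dist r w₁ = T.dist r y + 1 ∨ T.dist r w₂ = T.dist r y + 1 := by
    intro w₁ w₂ h₁ h₂ hw
    have := hT.dist_eq_dist_add_one_of_adj r h₁
    have := hT.dist_eq_dist_add_one_of_adj r h₂
    by_contra!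
    exact hw (hT.eq_of_adj_of_dist_add_one (r := r) h₁.symm h₂.symm (by omega) (by omega))
  have mk : ∀ x z u, T.neighborSet y = {x, z, u} → x ≠ z → x ≠ u → z ≠ u →
      T.dist r x = T.dist r y + 1 → T.dist r z = T.dist r y + 1 →
      ∃ x y z u, y ∈ C ∧ T.IsPendantP3 x y z u := fun x z u hN hxz hxu hzu hx hz ↦
    ⟨x, y, z, u, hyC, hleaf (by simp [← mem_neighborSet, hN]) hx,
      hleaf (by simp [← mem_neighborSet, hN]) hz, hN, hxz, hxu, hzu⟩
  obtain ⟨a₁, a₂, a₃, h₁₂, h₁₃, h₂₃, hN⟩ := Set.ncard_eq_three.1 (hC.ncard_neighborSet_eq y hyC)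
  have hadj : T.Adj y a₁ ∧ T.Adj y a₂ ∧ T.Adj y a₃ := by simp [← mem_neighborSet, hN]
  by_cases h₁ : T.dist r a₁ = T.dist r y + 1
  · rcases hchild a₂ a₃ hadj.2.1 hadj.2.2 h₂₃ with h₂ | h₃
    · exact mk a₁ a₂ a₃ hN h₁₂ h₁₃ h₂₃ h₁ h₂
    · exact mk a₁ a₃ a₂ (by rw [hN, Set.pair_comm]) h₁₃ h₁₂ h₂₃.symm h₁ h₃
  · exact mk a₂ a₃ a₁ (by rw [hN, Set.insert_comm, Set.pair_comm]) h₂₃ h₁₂.symm h₁₃.symm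
      ((hchild a₁ a₂ hadj.1 hadj.2.1 h₁₂).resolve_left h₁)
      ((hchild a₁ a₃ hadj.1 hadj.2.2 h₁₃).resolve_left h₁)

lemma IsTree.exists_builtByP3_of_isCubicSide {V : Type} [Finite V] {T : SimpleGraph V}
    {C : Set V} (hT : T.IsTree) (hC : T.IsCubicSide C) :
    ∃ (W : Type) (G : SimpleGraph W), BuiltByP3 W G ∧ Nonempty (T ≃g G) := by
  induction hn : Nat.card V using Nat.strong_induction_on generalizing V with
  | _ n ih =>
  rcases C.eq_empty_or_nonempty with rfl | hne
  · have hbot : T = ⊥ := by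
      ext a b
      simpa using mt (hC.mem_iff_notMem_of_adj (a := a) (b := b)) (by simp)
    subst hbot
    obtain ⟨_, _⟩ := connected_bot_iff.1 hT.connected
    obtain ⟨_⟩ := nonempty_unique V
    exact ⟨PUnit, ⊥, .base, ⟨⟨Equiv.ofUnique V PUnit, by simp⟩⟩⟩
  obtain ⟨x, y, z, u, hyC, hP⟩ := hC.exists_isPendantP3 hT hne
  have huC : u ∉ C := (hC.mem_iff_notMem_of_adj (hP.adj_center_iff.2 (by simp))).1 hyC
  have hcard : Nat.card ↥({x, y, z} : Set V)ᶜ + 3 = n := by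
    rw [← hn, ← Set.ncard_add_ncard_compl {x, y, z}, Nat.card_coe_set_eq,
      Set.ncard_eq_three.2 ⟨x, y, z, hP.left_ne_center, hP.left_ne_right,
        hP.right_ne_center.symm, rfl⟩, add_comm]
  obtain ⟨W, G, hG, ⟨e⟩⟩ := ih _ (by omega)
    ⟨hP.connected_induce_compl hT.connected, hT.isAcyclic.induce _⟩
    (hC.induce fun c hc hcS ↦ hP.neighborSet_subset_compl hcS (ne_of_mem_of_not_mem hc huC)) rfl
  exact ⟨_, _, hG.step _ (e ⟨u, hP.attach_mem_compl⟩), ⟨hP.isoAttachP3.trans (e.attachP3Congr _)⟩⟩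

end SimpleGraph

theorem stmt14 {V : Type} [Fintype V] (T : SimpleGraph V) (hT : T.IsTree)
    (hsub : ∀ v : V, (T.neighborSet v).ncard ≤ 3) (n : ℕ)
    (hn : Fintype.card V = n) :
    3 * _root_.indepNum T = 2 * n + 1 ↔
      ∃ (W : Type) (G : SimpleGraph W), BuiltByP3 W G ∧ Nonempty (T ≃g G) := by
  rw [indepNum_eq_indepNum, ← hn]
  constructor
  · intro h
    obtain ⟨C, hC⟩ := hT.exists_isCubicSide hsub h
    exact hT.exists_builtByP3_of_isCubicSide hC
  · rintro ⟨W, G, hG, ⟨e⟩⟩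
    rw [e.indepNum_eq, ← Nat.card_eq_fintype_card, Nat.card_congr e.toEquiv]
    exact hG.three_mul_indepNum
end
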